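/- If p₀ is a probability density on S with ∫_S e^{iθ} p₀(θ) dθ = 0 and p_t solves ∂_t p = (1/2)∂²_θ p − ∂_θ((J*p)·p) with J(θ) = −K sin θ and initial condition p₀, then p_t also solves the heat equation ∂_t p_t = (1/2)∂²_θ p_t, i.e. the nonlinear term vanishes along the solution: ∫_S e^{iθ} p_t(θ) dθ = 0 for all t ≥ 0 and hence (J*p_t) ≡ 0. -/

import Mathlib

open Real MeasureTheory

/-- Convolution with `J(θ) = -K sin θ` on the circle. -/
noncomputable def Jconv (K : ℝ) (p : ℝ → ℝ) (θ : ℝ) : ℝ :=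
  ∫ θ' in (0:ℝ)..(2 * π), (-K * Real.sin (θ - θ')) * p θ'

/-- First Fourier coefficient `∫_S e^{iθ} p(θ) dθ`. -/
noncomputable def firstFourier (p : ℝ → ℝ) : ℂ :=
  ∫ θ in (0:ℝ)..(2 * π), (p θ : ℂ) * Complex.exp (Complex.I * (θ : ℂ))

lemma expI_hasDerivAt (x : ℝ) :
    HasDerivAt (fun x : ℝ => Complex.exp (Complex.I * x))
      (Complex.I * Complex.exp (Complex.I * x)) x := by
  have h1 : HasDerivAt (fun x : ℝ => (x : ℂ)) 1 x := by
    simpa using (hasDerivAt_id x).ofReal_comp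
  have h2 := (h1.const_mul Complex.I).cexp
  simpa [mul_comm] using h2

lemma norm_mul_expI (r θ : ℝ) : ‖(r : ℂ) * Complex.exp (Complex.I * θ)‖ = |r| := by
  rw [norm_mul, mul_comm Complex.I]
  simp [Complex.norm_exp_ofReal_mul_I]

lemma expI_two_pi : Complex.exp (Complex.I * ((2 * π : ℝ) : ℂ)) = 1 := by
  push_cast
  rw [mul_comm]
  exact Complex.exp_two_pi_mul_I

lemma expI_continuous : Continuous fun θ : ℝ => Complex.exp (Complex.I * θ) :=
  Complex.continuous_exp.comp (continuous_const.mul Complex.continuous_ofReal)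

/-- Integration by parts against `e^{iθ}` with periodic boundary. -/
lemma ibp_exp (u u' : ℝ → ℝ) (hu : ∀ x, HasDerivAt u (u' x) x) (hu' : Continuous u')
    (hp : u (2 * π) = u 0) :
    (∫ θ in (0:ℝ)..(2 * π), (u' θ : ℂ) * Complex.exp (Complex.I * θ))
      = -Complex.I * ∫ θ in (0:ℝ)..(2 * π), (u θ : ℂ) * Complex.exp (Complex.I * θ) := by
  have hucont : Continuous u := by
    rw [continuous_iff_continuousAt]; exact fun x => (hu x).continuousAt
  have hiu' : IntervalIntegrable (fun x : ℝ => (u' x : ℂ)) volume 0 (2 * π) :=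
    (Complex.continuous_ofReal.comp hu').intervalIntegrable _ _
  have hiv' : IntervalIntegrable (fun x : ℝ => Complex.I * Complex.exp (Complex.I * x))
      volume 0 (2 * π) := (continuous_const.mul expI_continuous).intervalIntegrable _ _
  have key := intervalIntegral.integral_deriv_mul_eq_sub
    (u := fun x : ℝ => (u x : ℂ)) (v := fun x : ℝ => Complex.exp (Complex.I * x))
    (u' := fun x : ℝ => (u' x : ℂ)) (v' := fun x : ℝ => Complex.I * Complex.exp (Complex.I * x))
    (fun x _ => (hu x).ofReal_comp) (fun x _ => expI_hasDerivAt x) hiu' hiv'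
  have hsplit : (∫ θ in (0:ℝ)..(2 * π),
        ((u' θ : ℂ) * Complex.exp (Complex.I * θ)
          + (u θ : ℂ) * (Complex.I * Complex.exp (Complex.I * θ))))
      = (∫ θ in (0:ℝ)..(2 * π), (u' θ : ℂ) * Complex.exp (Complex.I * θ))
        + ∫ θ in (0:ℝ)..(2 * π), (u θ : ℂ) * (Complex.I * Complex.exp (Complex.I * θ)) := by
    apply intervalIntegral.integral_add
    · exact ((Complex.continuous_ofReal.comp hu').mul expI_continuous).intervalIntegrable _ _
    · exact ((Complex.continuous_ofReal.comp hucont).mul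
        (continuous_const.mul expI_continuous)).intervalIntegrable _ _
  rw [hsplit] at key
  have hbdry : ((u (2 * π) : ℂ)) * Complex.exp (Complex.I * ((2 * π : ℝ) : ℂ))
      - (u 0 : ℂ) * Complex.exp (Complex.I * ((0 : ℝ) : ℂ)) = 0 := by
    rw [expI_two_pi, hp]; simp
  rw [hbdry] at key
  have h2 : (∫ θ in (0:ℝ)..(2 * π), (u θ : ℂ) * (Complex.I * Complex.exp (Complex.I * θ)))
      = Complex.I * ∫ θ in (0:ℝ)..(2 * π), (u θ : ℂ) * Complex.exp (Complex.I * θ) := by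
    rw [← intervalIntegral.integral_const_mul]
    congr 1; funext θ; ring
  rw [h2] at key
  linear_combination key

lemma firstFourier_eq (q : ℝ → ℝ) (hq : Continuous q) :
    firstFourier q = ((∫ θ in (0:ℝ)..(2 * π), q θ * Real.cos θ : ℝ) : ℂ)
      + ((∫ θ in (0:ℝ)..(2 * π), q θ * Real.sin θ : ℝ) : ℂ) * Complex.I := by
  unfold firstFourier
  have h : ∀ θ : ℝ, (q θ : ℂ) * Complex.exp (Complex.I * θ)
      = ((q θ * Real.cos θ : ℝ) : ℂ) + ((q θ * Real.sin θ : ℝ) : ℂ) * Complex.I := by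
    intro θ
    rw [mul_comm Complex.I, Complex.exp_mul_I]
    push_cast [← Complex.ofReal_cos, ← Complex.ofReal_sin]
    ring
  simp_rw [h]
  rw [intervalIntegral.integral_add, intervalIntegral.integral_mul_const,
    intervalIntegral.integral_ofReal, intervalIntegral.integral_ofReal]
  · exact ((Complex.continuous_ofReal.comp (hq.mul Real.continuous_cos))).intervalIntegrable _ _
  · exact (((Complex.continuous_ofReal.comp (hq.mul Real.continuous_sin))).mul
      continuous_const).intervalIntegrable _ _

lemma Jconv_eq (K : ℝ) (q : ℝ → ℝ) (hq : Continuous q) (θ : ℝ) :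
    Jconv K q θ = -K * (Real.sin θ * (∫ x in (0:ℝ)..(2 * π), q x * Real.cos x)
      - Real.cos θ * (∫ x in (0:ℝ)..(2 * π), q x * Real.sin x)) := by
  unfold Jconv
  have h : ∀ x : ℝ, -K * Real.sin (θ - x) * q x
      = (-K * Real.sin θ) * (q x * Real.cos x) + (K * Real.cos θ) * (q x * Real.sin x) := by
    intro x; rw [Real.sin_sub]; ring
  simp_rw [h]
  rw [intervalIntegral.integral_add (f := fun x => -K * Real.sin θ * (q x * Real.cos x))
      (g := fun x => K * Real.cos θ * (q x * Real.sin x)) ((continuous_const.mul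
      (hq.mul Real.continuous_cos)).intervalIntegrable _ _)
    ((continuous_const.mul (hq.mul Real.continuous_sin)).intervalIntegrable _ _),
    intervalIntegral.integral_const_mul, intervalIntegral.integral_const_mul]
  ring

/-- If a smooth solution of the nonlocal Fokker–Planck equation, remaining a
probability density, starts with vanishing first Fourier coefficient (`p₀ ∈ U`),
then the first Fourier coefficient vanishes for all `t ≥ 0`, the nonlinear term
vanishes (`J*p_t ≡ 0`), and `p_t` solves the heat equation. -/
theorem solution_from_U_solves_heat_equation (K : ℝ) (p : ℝ → ℝ → ℝ)
    (hsmooth : ContDiff ℝ (⊤ : ℕ∞) (fun x : ℝ × ℝ => p x.1 x.2))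
    (hper : ∀ t θ, p t (θ + 2 * π) = p t θ)
    (hnonneg : ∀ t θ, 0 ≤ t → 0 ≤ p t θ)
    (hprob : ∀ t, 0 ≤ t → (∫ θ in (0:ℝ)..(2 * π), p t θ) = 1)
    (hPDE : ∀ t θ, 0 ≤ t →
      deriv (fun s => p s θ) t
        = (1 / 2) * deriv (deriv (p t)) θ
            - deriv (fun θ' => Jconv K (p t) θ' * p t θ') θ)
    (hinit : firstFourier (p 0) = 0) :
    ∀ t, 0 ≤ t →
      firstFourier (p t) = 0 ∧
      (∀ θ, Jconv K (p t) θ = 0) ∧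
      (∀ θ, deriv (fun s => p s θ) t = (1 / 2) * deriv (deriv (p t)) θ) := by
  set f : ℝ × ℝ → ℝ := fun x => p x.1 x.2 with hfdef
  have hfd : Differentiable ℝ f := hsmooth.differentiable (by simp)
  have hps : ∀ t, ContDiff ℝ (⊤ : ℕ∞) (p t) := fun t =>
    hsmooth.comp ((contDiff_const (c := t)).prodMk contDiff_id)
  have hpsi : ∀ t, ContDiff ℝ (⊤ : ℕ∞) (p t) := fun t => (hps t).of_le (by simp)
  have hpt' : ∀ t θ : ℝ, HasDerivAt (fun s => p s θ) (fderiv ℝ f (t, θ) (1, 0)) t := by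
    intro t θ
    have hline : HasDerivAt (fun s : ℝ => (s, θ)) ((1 : ℝ), (0 : ℝ)) t :=
      (hasDerivAt_id t).prodMk (hasDerivAt_const t θ)
    exact (hfd (t, θ)).hasFDerivAt.comp_hasDerivAt t hline
  have hcontd : Continuous fun x : ℝ × ℝ => fderiv ℝ f x (1, 0) := by
    have h1 : Continuous (fderiv ℝ f) := hsmooth.continuous_fderiv (by simp)
    exact (ContinuousLinearMap.apply ℝ ℝ ((1 : ℝ), (0 : ℝ))).continuous.comp h1
  set A : ℝ → ℝ := fun t => ∫ θ in (0:ℝ)..(2 * π), p t θ * Real.cos θ with hAdef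
  set B : ℝ → ℝ := fun t => ∫ θ in (0:ℝ)..(2 * π), p t θ * Real.sin θ with hBdef
  set c : ℝ → ℂ := fun t => firstFourier (p t) with hcdef
  have hcAB : ∀ t, c t = (A t : ℂ) + (B t : ℂ) * Complex.I := fun t =>
    firstFourier_eq _ (hps t).continuous
  have hJf : ∀ t θ, Jconv K (p t) θ = -K * (Real.sin θ * A t - Real.cos θ * B t) := fun t θ =>
    Jconv_eq K (p t) (hps t).continuous θ
  -- the derivative of c
  set cd : ℝ → ℂ := fun t => ∫ θ in (0:ℝ)..(2 * π),
      ((fderiv ℝ f (t, θ) (1, 0) : ℝ) : ℂ) * Complex.exp (Complex.I * θ) with hcddef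
  have hcder : ∀ t, HasDerivAt c (cd t) t := by
    intro t
    obtain ⟨M, hM⟩ : ∃ M, ∀ x ∈ Set.Icc (t - 1) (t + 1) ×ˢ Set.Icc (0 : ℝ) (2 * π),
        |fderiv ℝ f x (1, 0)| ≤ M := by
      obtain ⟨M, hM⟩ := (isCompact_Icc.prod isCompact_Icc).exists_bound_of_continuousOn
        (f := fun x : ℝ × ℝ => fderiv ℝ f x (1, 0)) hcontd.continuousOn
      exact ⟨M, fun x hx => by simpa using hM x hx⟩
    have key := intervalIntegral.hasDerivAt_integral_of_dominated_loc_of_deriv_le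
      (μ := volume) (a := 0) (b := 2 * π) (x₀ := t) (s := Metric.ball t 1) (Metric.ball_mem_nhds t (by norm_num))
      (F := fun s θ => (p s θ : ℂ) * Complex.exp (Complex.I * θ))
      (F' := fun s θ => ((fderiv ℝ f (s, θ) (1, 0) : ℝ) : ℂ) * Complex.exp (Complex.I * θ))
      (bound := fun _ => M)
      (Filter.Eventually.of_forall fun s =>
        (((Complex.continuous_ofReal.comp (hps s).continuous).mul
          expI_continuous)).aestronglyMeasurable)
      (((Complex.continuous_ofReal.comp (hps t).continuous).mul
          expI_continuous).intervalIntegrable _ _)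
      (((Complex.continuous_ofReal.comp (hcontd.comp
          (continuous_const.prodMk continuous_id))).mul expI_continuous).aestronglyMeasurable)
      ?_ (intervalIntegrable_const) ?_
    · exact key.2
    · apply Filter.Eventually.of_forall
      intro θ hθ s hs
      rw [norm_mul_expI]
      apply hM
      constructor
      · have := Metric.mem_ball.mp hs
        rw [Real.dist_eq] at this
        constructor <;> [linarith [(abs_le.mp this.le).1]; linarith [(abs_le.mp this.le).2]]
      · rw [Set.uIoc_of_le (by positivity : (0:ℝ) ≤ 2 * π)] at hθ
        exact ⟨hθ.1.le, hθ.2⟩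
    · exact Filter.Eventually.of_forall fun θ _ s _ => ((hpt' s θ).ofReal_comp).mul_const _
  have hccont : Continuous c := by
    rw [continuous_iff_continuousAt]
    exact fun t => (hcder t).continuousAt
  -- key computation of cd for t ≥ 0
  have keyEq : ∀ t, 0 ≤ t → cd t = -(1/2 : ℂ) * c t
      + Complex.I * ∫ θ in (0:ℝ)..(2 * π),
          ((Jconv K (p t) θ * p t θ : ℝ) : ℂ) * Complex.exp (Complex.I * θ) := by
    intro t ht
    set h : ℝ → ℝ := fun θ' => Jconv K (p t) θ' * p t θ' with hhdef
    have hone : (1 : WithTop ℕ∞) ≤ ((⊤ : ℕ∞) : WithTop ℕ∞) := by exact_mod_cast le_top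
    have hhfun : h = fun θ' => (-K * (Real.sin θ' * A t - Real.cos θ' * B t)) * p t θ' :=
      funext fun θ' => by
        show Jconv K (p t) θ' * p t θ' = _
        rw [hJf t θ']
    have hhsm : ContDiff ℝ (⊤ : ℕ∞) h := by
      rw [hhfun]
      exact ((contDiff_const.mul ((Real.contDiff_sin.mul contDiff_const).sub
        (Real.contDiff_cos.mul contDiff_const)))).mul (hpsi t)
    have hq1 : ContDiff ℝ (⊤ : ℕ∞) (deriv (p t)) := (contDiff_infty_iff_deriv.mp (hpsi t)).2
    have hq2 : ContDiff ℝ (⊤ : ℕ∞) (deriv (deriv (p t))) := (contDiff_infty_iff_deriv.mp hq1).2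
    have hh1 : ContDiff ℝ (⊤ : ℕ∞) (deriv h) := (contDiff_infty_iff_deriv.mp hhsm).2
    have hd1 : ∀ x, HasDerivAt (p t) (deriv (p t) x) x := fun x =>
      ((hpsi t).differentiable (zero_lt_one.trans_le hone).ne' x).hasDerivAt
    have hd2 : ∀ x, HasDerivAt (deriv (p t)) (deriv (deriv (p t)) x) x := fun x =>
      (hq1.differentiable (zero_lt_one.trans_le hone).ne' x).hasDerivAt
    have hdh : ∀ x, HasDerivAt h (deriv h x) x := fun x =>
      (hhsm.differentiable (zero_lt_one.trans_le hone).ne' x).hasDerivAt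
    have hqper0 : p t (2 * π) = p t 0 := by
      have := hper t 0; rwa [zero_add] at this
    have hdqper : deriv (p t) (2 * π) = deriv (p t) 0 := by
      have hfun : (fun x => p t (x + 2 * π)) = p t := funext (hper t)
      calc deriv (p t) (2 * π) = deriv (p t) (0 + 2 * π) := by rw [zero_add]
        _ = deriv (fun x => p t (x + 2 * π)) 0 := (deriv_comp_add_const (p t) (2 * π) 0).symm
        _ = deriv (p t) 0 := by rw [hfun]
    have hhper : h (2 * π) = h 0 := by
      rw [hhdef]
      simp only [hJf t (2 * π), hJf t 0, Real.sin_two_pi, Real.cos_two_pi, Real.sin_zero,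
        Real.cos_zero, hqper0]
    have E1 := ibp_exp (deriv (p t)) (deriv (deriv (p t))) hd2 hq2.continuous hdqper
    have E2 := ibp_exp (p t) (deriv (p t)) hd1 hq1.continuous hqper0
    have E3 := ibp_exp h (deriv h) hdh hh1.continuous hhper
    have hct : (∫ θ in (0:ℝ)..(2 * π), (p t θ : ℂ) * Complex.exp (Complex.I * θ)) = c t := rfl
    rw [hct] at E2
    have hintrw : ∀ θ : ℝ, ((fderiv ℝ f (t, θ) (1, 0) : ℝ) : ℂ) * Complex.exp (Complex.I * θ)
        = (1/2 : ℂ) * (((deriv (deriv (p t)) θ : ℝ) : ℂ) * Complex.exp (Complex.I * θ))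
          - ((deriv h θ : ℝ) : ℂ) * Complex.exp (Complex.I * θ) := by
      intro θ
      rw [← (hpt' t θ).deriv, hPDE t θ ht]
      push_cast
      ring
    rw [hcddef]
    simp only [hintrw]
    rw [intervalIntegral.integral_sub, intervalIntegral.integral_const_mul, E1, E2, E3]
    · ring_nf
      rw [Complex.I_sq]
      ring
    · exact (continuous_const.mul ((Complex.continuous_ofReal.comp hq2.continuous).mul
        expI_continuous)).intervalIntegrable _ _
    · exact ((Complex.continuous_ofReal.comp hh1.continuous).mul
        expI_continuous).intervalIntegrable _ _
  -- norm bound on cd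
  set L : ℝ := 1/2 + 2 * |K| with hLdef
  have keyBound : ∀ t, 0 ≤ t → ‖cd t‖ ≤ L * ‖c t‖ := by
    intro t ht
    have hHb : ‖∫ θ in (0:ℝ)..(2 * π),
        ((Jconv K (p t) θ * p t θ : ℝ) : ℂ) * Complex.exp (Complex.I * θ)‖
        ≤ |K| * (|A t| + |B t|) := by
      have hb := intervalIntegral.norm_integral_le_of_norm_le (μ := volume) (a := 0) (b := 2 * π)
        (f := fun θ => ((Jconv K (p t) θ * p t θ : ℝ) : ℂ) * Complex.exp (Complex.I * θ))
        (g := fun θ => (|K| * (|A t| + |B t|)) * p t θ)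
        (by positivity) (Filter.Eventually.of_forall fun θ _ => ?_)
        ((continuous_const.mul (hps t).continuous).intervalIntegrable _ _)
      · rw [intervalIntegral.integral_const_mul, hprob t ht, mul_one] at hb
        calc _ ≤ |(|K| * (|A t| + |B t|))| := hb.trans (le_abs_self _)
          _ = |K| * (|A t| + |B t|) := abs_of_nonneg (by positivity)
      · rw [norm_mul_expI, abs_mul, abs_of_nonneg (hnonneg t θ ht)]
        apply mul_le_mul_of_nonneg_right _ (hnonneg t θ ht)
        rw [hJf t θ, abs_mul, abs_neg]
        apply mul_le_mul_of_nonneg_left _ (abs_nonneg K) |>.trans_eq rfl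
        calc |Real.sin θ * A t - Real.cos θ * B t|
            ≤ |Real.sin θ * A t| + |Real.cos θ * B t| := abs_sub _ _
          _ = |Real.sin θ| * |A t| + |Real.cos θ| * |B t| := by rw [abs_mul, abs_mul]
          _ ≤ 1 * |A t| + 1 * |B t| := by
              gcongr
              · exact Real.abs_sin_le_one θ
              · exact Real.abs_cos_le_one θ
          _ = |A t| + |B t| := by ring
    have hA : |A t| ≤ ‖c t‖ := by
      have : (c t).re = A t := by rw [hcAB t]; simp
      rw [← this]
      exact Complex.abs_re_le_norm _
    have hB : |B t| ≤ ‖c t‖ := by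
      have : (c t).im = B t := by rw [hcAB t]; simp
      rw [← this]
      exact Complex.abs_im_le_norm _
    rw [keyEq t ht]
    calc ‖-(1/2 : ℂ) * c t + Complex.I * _‖
        ≤ ‖-(1/2 : ℂ) * c t‖ + ‖Complex.I * _‖ := norm_add_le _ _
      _ = (1/2) * ‖c t‖ + ‖(∫ θ in (0:ℝ)..(2 * π),
            ((Jconv K (p t) θ * p t θ : ℝ) : ℂ) * Complex.exp (Complex.I * θ))‖ := by
          rw [norm_mul, norm_mul]
          simp
      _ ≤ (1/2) * ‖c t‖ + |K| * (|A t| + |B t|) := by gcongr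
      _ ≤ (1/2) * ‖c t‖ + |K| * (‖c t‖ + ‖c t‖) := by gcongr
      _ = L * ‖c t‖ := by rw [hLdef]; ring
  -- Gronwall
  have hzero : ∀ t, 0 ≤ t → c t = 0 := by
    intro T hT
    have hg := norm_le_gronwallBound_of_norm_deriv_right_le (f := c) (f' := cd)
      (δ := 0) (K := L) (ε := 0) (a := 0) (b := T)
      hccont.continuousOn
      (fun x _ => (hcder x).hasDerivWithinAt)
      (by rw [hcdef]; simp [hinit])
      (fun x hx => by
        rw [add_zero]
        exact keyBound x hx.1)
      T (Set.mem_Icc.mpr ⟨hT, le_refl T⟩)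
    rw [gronwallBound_ε0_δ0] at hg
    exact norm_le_zero_iff.mp hg
  intro t ht
  have hct := hzero t ht
  have hAB : A t = 0 ∧ B t = 0 := by
    have h1 := hcAB t
    rw [hct] at h1
    have h2 := congrArg Complex.re h1
    have h3 := congrArg Complex.im h1
    simp at h2 h3
    exact ⟨h2.symm, h3.symm⟩
  have hJ0 : ∀ θ, Jconv K (p t) θ = 0 := by
    intro θ
    rw [hJf t θ, hAB.1, hAB.2]
    ring
  refine ⟨hct, hJ0, fun θ => ?_⟩
  have hp := hPDE t θ ht
  have hfun : (fun θ' => Jconv K (p t) θ' * p t θ') = fun _ => (0 : ℝ) :=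
    funext fun θ' => by rw [hJ0 θ']; ring
  rw [hfun] at hp
  simpa using hp
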